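/- arXiv:1505.05143 — 9 statements merged into one kernel-verified Lean document; each statement's English description precedes it below -/
import Mathlib

section
/- Let $n$ be a positive integer and let $p$ and $r$ be distinct primes. Suppose there are positive integers $a$ and $b$ such that $p^a$ divides $n$ and $r^b < n < p^a + r^b$. Then for every $k$ with $0 < k < n$, at least one of $p$ or $r$ divides $\binom{n}{k}$. -/
/-!
If neither `p` nor `r` divided `C(n, k)`, then `p ^ a` would divide both `k` and `n - k`
(because `p ^ a ∣ n` and `(n + 1) C(n, k) = C(n + 1, k + 1) (k + 1)`), so both would be at
least `p ^ a` and hence, by `n < p ^ a + r ^ b`, both smaller than `r ^ b`. Adding `k` and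
`n - k` in base `r` then carries into the digit of `r ^ b`, since `r ^ b < n`, and Kummer's
theorem gives `r ∣ C(n, k)`.
-/

namespace Nat

theorem Prime.pow_dvd_of_dvd_of_not_dvd_choose {p a n k : ℕ} (hp : p.Prime) (hpa : p ^ a ∣ n)
    (hchoose : ¬p ∣ n.choose k) : p ^ a ∣ k := by
  obtain _ | m := k
  · exact dvd_zero _
  obtain _ | n' := n
  · simp at hchoose
  have hprod : p ^ a ∣ (n' + 1).choose (m + 1) * (m + 1) :=
    add_one_mul_choose_eq n' m ▸ hpa.mul_right _
  exact ((hp.coprime_iff_not_dvd.2 hchoose).pow_left a).dvd_of_dvd_mul_left hprod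

theorem Prime.dvd_choose_add_of_lt_pow_le_add {r b m k : ℕ} (hr : r.Prime) (hm : m < r ^ b)
    (hk : k < r ^ b) (hmk : r ^ b ≤ m + k) : r ∣ (m + k).choose k := by
  have hb : b ≠ 0 := by
    rintro rfl
    rw [pow_zero] at hm hk hmk
    omega
  have hcarry : b ∈ ({i ∈ Finset.Ico 1 (log r (m + k) + 1) | r ^ i ≤ k % r ^ i + m % r ^ i}) := by
    have hlog : b ≤ log r (m + k) := (le_log_iff_pow_le hr.one_lt (by omega)).2 hmk
    rw [Finset.mem_filter, Finset.mem_Ico, mod_eq_of_lt hk, mod_eq_of_lt hm]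
    omega
  have hmult : (1 : ℕ∞) ≤ emultiplicity r ((m + k).choose k) := by
    rw [hr.emultiplicity_choose' (lt_succ_self _)]
    exact_mod_cast Finset.card_pos.2 ⟨b, hcarry⟩
  simpa using pow_dvd_of_le_emultiplicity hmult

end Nat

theorem stmt_4_general (n p r a b : ℕ) (hp : p.Prime) (hr : r.Prime) (hpa : p ^ a ∣ n)
    (h1 : r ^ b < n) (h2 : n < p ^ a + r ^ b) :
    ∀ k, 0 < k → k < n → p ∣ Nat.choose n k ∨ r ∣ Nat.choose n k := by
  intro k hk hkn
  by_contra! hndvd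
  have hpk : p ^ a ≤ k :=
    Nat.le_of_dvd hk (hp.pow_dvd_of_dvd_of_not_dvd_choose hpa hndvd.1)
  have hpnk : p ^ a ≤ n - k := by
    refine Nat.le_of_dvd (by omega) (hp.pow_dvd_of_dvd_of_not_dvd_choose hpa ?_)
    rw [Nat.choose_symm hkn.le]
    exact hndvd.1
  have hsum : n - k + k = n := by omega
  have hr_dvd := hr.dvd_choose_add_of_lt_pow_le_add (b := b) (m := n - k) (k := k)
    (by omega) (by omega) (by omega)
  exact hndvd.2 (hsum ▸ hr_dvd)

theorem stmt_4 (n p r a b : ℕ) (hn : 0 < n) (hp : p.Prime) (hr : r.Prime)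
    (hpr : p ≠ r) (ha : 0 < a) (hb : 0 < b) (hpa : p ^ a ∣ n)
    (h1 : r ^ b < n) (h2 : n < p ^ a + r ^ b) :
    ∀ k, 0 < k → k < n → p ∣ Nat.choose n k ∨ r ∣ Nat.choose n k :=
  stmt_4_general n p r a b hp hr hpa h1 h2
end

section
/- Let $n$ be a positive integer, $d$ a nontrivial proper divisor of $n$, and $p$ a prime. Define $I_{n,d} = \frac{n!}{(d!)^{n/d}(n/d)!}$. Then $p$ divides $I_{n,d}$ if and only if (i) at least one carry occurs when adding $n/d$ copies of $d$ in base $p$, and (ii) $d$ is not a power of $p$. -/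
/-!
Write `s(x)` for the base-`p` digit sum and `I = I_{m,d}` with `m = n / d`. Legendre's formula
`(p - 1) v_p(k!) = k - s(k)` gives `(p - 1) v_p(I) = m s(d) + s(m) - s(md) - m`, and this equals
`(s(m) s(d) - s(md)) + (m - s(m)) (s(d) - 1)`, a sum of two nonnegative terms because the digit sum
is submultiplicative and `s(m) ≤ m`. So `p ∤ I` iff `s(md) = s(m) s(d)` and either `s(d) = 1`,
i.e. `d` is a power of `p`, or `s(m) = m`. For `d = p^c` the first condition always holds; otherwise
`s(md) = m s(d)` holds exactly when adding `m` copies of `d` produces no carry, because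
`s(x + y) = s(x) + s(y)` holds exactly when adding `x` and `y` produces no carry.
-/

namespace Nat

variable {p : ℕ}

theorem digits_sum_eq_mod_add_div (hp : 1 < p) (x : ℕ) :
    (p.digits x).sum = x % p + (p.digits (x / p)).sum := by
  rcases eq_or_ne x 0 with rfl | hx
  · simp
  · rw [digits_eq_cons_digits_div hp hx, List.sum_cons]

theorem digits_sum_add_base_mul (hp : 1 < p) {a : ℕ} (ha : a < p) (q : ℕ) :
    (p.digits (a + p * q)).sum = a + (p.digits q).sum := by
  rw [digits_sum_eq_mod_add_div hp, add_mul_mod_self_left, mod_eq_of_lt ha,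
    add_mul_div_left _ _ (by omega), div_eq_of_lt ha, zero_add]

theorem digits_sum_pos {x : ℕ} (hx : x ≠ 0) : 0 < (p.digits x).sum :=
  List.sum_pos_iff_exists_pos_nat.mpr
    ⟨_, List.getLast_mem _, pos_of_ne_zero (getLast_digit_ne_zero p hx)⟩

theorem digits_sum_of_lt {x : ℕ} (hx : x < p) : (p.digits x).sum = x := by
  rcases eq_or_ne x 0 with rfl | hx0
  · simp
  · simp [digits_of_lt p x hx0 hx]

theorem digits_sum_base_pow_mul (hp : 1 < p) (c x : ℕ) :
    (p.digits (p ^ c * x)).sum = (p.digits x).sum := by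
  rcases eq_or_ne x 0 with rfl | hx
  · simp
  · simp [digits_base_pow_mul hp (pos_of_ne_zero hx)]

theorem digits_sum_base_pow (hp : 1 < p) (c : ℕ) : (p.digits (p ^ c)).sum = 1 := by
  simpa [digits_sum_of_lt hp] using digits_sum_base_pow_mul hp c 1

theorem exists_eq_base_pow_of_digits_sum_eq_one (hp : 1 < p) {x : ℕ}
    (hx : (p.digits x).sum = 1) : ∃ c, x = p ^ c := by
  induction x using Nat.strong_induction_on with
  | _ x ih =>
  have hx0 : x ≠ 0 := by rintro rfl; simp at hx
  rw [digits_sum_eq_mod_add_div hp] at hx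
  have hsplit := (mod_add_div x p).symm
  rcases Nat.eq_zero_or_pos (p.digits (x / p)).sum with hq | hq
  · refine ⟨0, ?_⟩
    have : x / p = 0 := by_contra fun h => (digits_sum_pos h).ne' hq
    rw [this, mul_zero, add_zero] at hsplit
    rw [pow_zero]
    omega
  · obtain ⟨c, hc⟩ := ih (x / p) (div_lt_self (pos_of_ne_zero hx0) hp) (by omega)
    refine ⟨c + 1, ?_⟩
    rw [hsplit, hc, pow_succ']
    omega

/-- `c` is an incoming carry; the outgoing carry of the lowest digit is again at most `1`. -/
theorem digits_sum_add_add_le (hp : 1 < p) {c : ℕ} (hc : c ≤ 1) (x y : ℕ) :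
    (p.digits (x + y + c)).sum ≤ (p.digits x).sum + (p.digits y).sum + c := by
  induction hxy : x + y using Nat.strong_induction_on generalizing x y c with
  | _ n ih =>
  subst hxy
  rcases eq_or_ne (x + y) 0 with hn | hn
  · obtain ⟨rfl, rfl⟩ : x = 0 ∧ y = 0 := by omega
    simpa using digit_sum_le p c
  have hp0 : 0 < p := by omega
  set q := (x % p + y % p + c) / p
  set r := (x % p + y % p + c) % p
  have hq : q ≤ 1 := by
    have := mod_lt x hp0
    have := mod_lt y hp0
    exact Nat.lt_succ_iff.mp ((Nat.div_lt_iff_lt_mul hp0).mpr (by omega))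
  have hrq : r + p * q = x % p + y % p + c := mod_add_div _ _
  have hsplit : x + y + c = r + p * (x / p + y / p + q) := by
    have := mod_add_div x p
    have := mod_add_div y p
    rw [mul_add, mul_add]
    omega
  have hlt : x / p + y / p < x + y :=
    div_add_div_le_add_div.trans_lt (div_lt_self (pos_of_ne_zero hn) hp)
  have hrec := ih _ hlt hq (x / p) (y / p) rfl
  rw [hsplit, digits_sum_add_base_mul hp (mod_lt _ hp0), digits_sum_eq_mod_add_div hp x,
    digits_sum_eq_mod_add_div hp y]
  have : q ≤ p * q := Nat.le_mul_of_pos_left q hp0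
  omega

theorem digits_sum_add_le (hp : 1 < p) (x y : ℕ) :
    (p.digits (x + y)).sum ≤ (p.digits x).sum + (p.digits y).sum :=
  digits_sum_add_add_le hp (zero_le 1) x y

theorem mod_add_mod_lt_of_digits_sum_add_eq (hp : 1 < p) {x y : ℕ}
    (h : (p.digits (x + y)).sum = (p.digits x).sum + (p.digits y).sum) : x % p + y % p < p := by
  by_contra! hcarry
  have hsplit : x + y = (x % p + y % p - p) + p * (x / p + y / p + 1) := by
    have := mod_add_div x p
    have := mod_add_div y p
    rw [mul_add, mul_add]
    omega
  have hrec := digits_sum_add_add_le hp le_rfl (x / p) (y / p)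
  have := mod_lt x (zero_lt_of_lt hp)
  have := mod_lt y (zero_lt_of_lt hp)
  rw [hsplit, digits_sum_add_base_mul hp (by omega), digits_sum_eq_mod_add_div hp x,
    digits_sum_eq_mod_add_div hp y] at h
  omega

theorem digit_add_of_digits_sum_add_eq (hp : 1 < p) {x y : ℕ}
    (h : (p.digits (x + y)).sum = (p.digits x).sum + (p.digits y).sum) (i : ℕ) :
    x / p ^ i % p + y / p ^ i % p < p ∧ (x + y) / p ^ i % p = x / p ^ i % p + y / p ^ i % p := by
  induction i generalizing x y with
  | zero =>
    have hlt := mod_add_mod_lt_of_digits_sum_add_eq hp h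
    simpa [add_mod_of_add_mod_lt hlt] using hlt
  | succ i ih =>
    have hlt := mod_add_mod_lt_of_digits_sum_add_eq hp h
    have hdiv : (x + y) / p = x / p + y / p := add_div_eq_of_add_mod_lt hlt
    rw [digits_sum_eq_mod_add_div hp (x + y), digits_sum_eq_mod_add_div hp x,
      digits_sum_eq_mod_add_div hp y, add_mod_of_add_mod_lt hlt, hdiv] at h
    simpa only [pow_succ', ← Nat.div_div_eq_div_mul, hdiv] using ih (by omega)

theorem digits_sum_mul_le (hp : 1 < p) (m x : ℕ) :
    (p.digits (m * x)).sum ≤ m * (p.digits x).sum := by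
  induction m with
  | zero => simp
  | succ m ih =>
    rw [add_one_mul, add_one_mul]
    exact (digits_sum_add_le hp _ _).trans (by omega)

theorem digit_mul_of_digits_sum_mul_eq (hp : 1 < p) {m x : ℕ}
    (h : (p.digits (m * x)).sum = m * (p.digits x).sum) (i : ℕ) :
    m * (x / p ^ i % p) < p ∧ m * x / p ^ i % p = m * (x / p ^ i % p) := by
  induction m with
  | zero => simpa using zero_lt_of_lt hp
  | succ m ih =>
    rw [add_one_mul, add_one_mul] at h ⊢
    have hadd := digits_sum_add_le hp (m * x) x
    have hmul := digits_sum_mul_le hp m x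
    obtain ⟨h₁, h₂⟩ := ih (by omega)
    obtain ⟨h₃, h₄⟩ := digit_add_of_digits_sum_add_eq hp (x := m * x) (y := x) (by omega) i
    omega

theorem digits_sum_mul_le_mul (hp : 1 < p) (a b : ℕ) :
    (p.digits (a * b)).sum ≤ (p.digits a).sum * (p.digits b).sum := by
  induction a using Nat.strong_induction_on with
  | _ a ih =>
  rcases eq_or_ne a 0 with rfl | ha
  · simp
  have hsplit : a * b = a % p * b + p ^ 1 * (a / p * b) := by
    rw [pow_one, ← mul_assoc, ← add_mul, mod_add_div]
  calc (p.digits (a * b)).sum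
      ≤ (p.digits (a % p * b)).sum + (p.digits (p ^ 1 * (a / p * b))).sum :=
        hsplit ▸ digits_sum_add_le hp _ _
    _ ≤ a % p * (p.digits b).sum + (p.digits (a / p)).sum * (p.digits b).sum := by
        rw [digits_sum_base_pow_mul hp]
        exact add_le_add (digits_sum_mul_le hp _ _) (ih _ (div_lt_self (pos_of_ne_zero ha) hp))
    _ = (p.digits a).sum * (p.digits b).sum := by
        rw [digits_sum_eq_mod_add_div hp a, add_mul]

theorem digits_sum_eq_sum_range (hp : 1 < p) {N x : ℕ} (hx : x < p ^ N) :
    (p.digits x).sum = ∑ i ∈ Finset.range N, x / p ^ i % p := by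
  induction N generalizing x with
  | zero => simp_all
  | succ N ih =>
    have hx' : x / p < p ^ N := (Nat.div_lt_iff_lt_mul (by omega)).mpr (pow_succ p N ▸ hx)
    rw [Finset.sum_range_succ', digits_sum_eq_mod_add_div hp, ih hx']
    simp only [pow_succ', ← Nat.div_div_eq_div_mul, pow_zero, Nat.div_one]
    omega

theorem digits_sum_eq_mul_of_digit_eq_mul (hp : 1 < p) {m x z : ℕ}
    (h : ∀ i, z / p ^ i % p = m * (x / p ^ i % p)) :
    (p.digits z).sum = m * (p.digits x).sum := by
  have hN : ∀ y, y ≤ z + x → y < p ^ (z + x) := fun y hy => hy.trans_lt (Nat.lt_pow_self hp)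
  rw [digits_sum_eq_sum_range hp (hN z (by omega)), digits_sum_eq_sum_range hp (hN x (by omega)),
    Finset.mul_sum]
  exact Finset.sum_congr rfl fun i _ => h i

theorem mul_digits_sum_add_digits_sum_eq_iff (hp : 1 < p) {m d : ℕ} (hd : d ≠ 0) :
    m * (p.digits d).sum + (p.digits m).sum = (p.digits (m * d)).sum + m ↔
      (∀ i, m * (d / p ^ i % p) < p ∧ m * (d / p ^ i % p) = m * d / p ^ i % p) ∨
        ∃ c, d = p ^ c := by
  constructor
  · intro h
    refine or_iff_not_imp_right.mpr fun hpow => ?_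
    have hsd : 2 ≤ (p.digits d).sum := by
      have := digits_sum_pos (p := p) hd
      have : (p.digits d).sum ≠ 1 := fun h1 => hpow (exists_eq_base_pow_of_digits_sum_eq_one hp h1)
      omega
    have hmul := digits_sum_mul_le_mul hp m d
    have hm := digit_sum_le p m
    -- `h` and `hmul` give `(m - s(m)) (s(d) - 1) ≤ 0`
    have hsm : (p.digits m).sum = m := by nlinarith
    exact fun i => (digit_mul_of_digits_sum_mul_eq hp (by omega) i).imp_right Eq.symm
  · rintro (hno | ⟨c, rfl⟩)
    · have hsum := digits_sum_eq_sum_range hp (Nat.lt_pow_self hp : d < p ^ d)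
      obtain ⟨i, -, hi⟩ := Finset.exists_ne_zero_of_sum_ne_zero (hsum ▸ (digits_sum_pos hd).ne')
      have hm : m < p := (Nat.le_mul_of_pos_right m (pos_of_ne_zero hi)).trans_lt (hno i).1
      rw [digits_sum_of_lt hm, digits_sum_eq_mul_of_digit_eq_mul hp fun i => (hno i).2.symm]
    · rw [digits_sum_base_pow hp, mul_comm m (p ^ c), digits_sum_base_pow_mul hp]
      omega

theorem sub_one_mul_padicValNat_factorial_add_digits_sum [Fact p.Prime] (n : ℕ) :
    (p - 1) * padicValNat p n ! + (p.digits n).sum = n := by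
  rw [sub_one_mul_padicValNat_factorial, Nat.sub_add_cancel (digit_sum_le p n)]

theorem uniformBell_ne_zero (m : ℕ) {d : ℕ} (hd : d ≠ 0) : uniformBell m d ≠ 0 := by
  intro h
  have := uniformBell_mul_eq m hd
  rw [h, zero_mul, zero_mul] at this
  exact factorial_ne_zero _ this.symm

theorem sub_one_mul_padicValNat_uniformBell_add [Fact p.Prime] (m : ℕ) {d : ℕ} (hd : d ≠ 0) :
    (p - 1) * padicValNat p (uniformBell m d) + ((p.digits (m * d)).sum + m) =
      m * (p.digits d).sum + (p.digits m).sum := by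
  have hval := congrArg (padicValNat p) (uniformBell_mul_eq m hd)
  rw [padicValNat.mul (mul_ne_zero (uniformBell_ne_zero m hd) (pow_ne_zero _ d.factorial_ne_zero))
    m.factorial_ne_zero, padicValNat.mul (uniformBell_ne_zero m hd)
    (pow_ne_zero _ d.factorial_ne_zero), padicValNat.pow] at hval
  have h₁ := sub_one_mul_padicValNat_factorial_add_digits_sum (p := p) (m * d)
  have h₂ := sub_one_mul_padicValNat_factorial_add_digits_sum (p := p) d
  have h₃ := sub_one_mul_padicValNat_factorial_add_digits_sum (p := p) m
  linear_combination h₁ - m * h₂ - h₃ + (p - 1) * hval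

theorem prime_dvd_uniformBell_iff (hp : p.Prime) (m : ℕ) {d : ℕ} (hd : d ≠ 0) :
    p ∣ uniformBell m d ↔
      m * (p.digits d).sum + (p.digits m).sum ≠ (p.digits (m * d)).sum + m := by
  have := Fact.mk hp
  rw [dvd_iff_padicValNat_ne_zero (uniformBell_ne_zero m hd),
    ← sub_one_mul_padicValNat_uniformBell_add m hd]
  simp [Nat.sub_eq_zero_iff_le, hp.one_lt]

end Nat

theorem stmt_6_general (n d p : ℕ) (hd1 : 1 < d)
    (hdvd : d ∣ n) (hp : p.Prime) :
    p ∣ Nat.factorial n / (Nat.factorial d ^ (n / d) * Nat.factorial (n / d)) ↔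
      (¬ ∀ i : ℕ, (n / d) * (Nat.digits p d).getD i 0 < p ∧
          (n / d) * (Nat.digits p d).getD i 0 = (Nat.digits p n).getD i 0) ∧
      (¬ ∃ c : ℕ, d = p ^ c) := by
  have hd : d ≠ 0 := by omega
  obtain ⟨m, rfl⟩ := hdvd
  rw [Nat.mul_div_cancel_left m (Nat.pos_of_ne_zero hd), mul_comm d m,
    ← Nat.uniformBell_eq_div m hd, Nat.prime_dvd_uniformBell_iff hp m hd, Ne,
    Nat.mul_digits_sum_add_digits_sum_eq_iff hp.one_lt hd]
  simp only [Nat.getD_digits _ _ hp.two_le]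
  tauto

theorem stmt_6 (n d p : ℕ) (hn : 0 < n) (hd1 : 1 < d) (hdn : d < n)
    (hdvd : d ∣ n) (hp : p.Prime) :
    p ∣ Nat.factorial n / (Nat.factorial d ^ (n / d) * Nat.factorial (n / d)) ↔
      (¬ ∀ i : ℕ, (n / d) * (Nat.digits p d).getD i 0 < p ∧
          (n / d) * (Nat.digits p d).getD i 0 = (Nat.digits p n).getD i 0) ∧
      (¬ ∃ c : ℕ, d = p ^ c) :=
  stmt_6_general n d p hd1 hdvd hp
end

section
/- Let $n$ and $b$ be positive integers and $r$ a prime such that $n/2 < r^b \le n$. If $d$ is a nontrivial proper divisor of $n$ that is not a power of $r$, then $r$ divides $I_{n,d} = \frac{n!}{(d!)^{n/d}(n/d)!}$. -/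
theorem stmt_7 (n b r d : ℕ) (hn : 0 < n) (hb : 0 < b) (hr : r.Prime)
    (h1 : n < 2 * r ^ b) (h2 : r ^ b ≤ n)
    (hd1 : 1 < d) (hdn : d < n) (hdvd : d ∣ n) (hdr : ¬ ∃ c : ℕ, d = r ^ c) :
    r ∣ Nat.factorial n / (Nat.factorial d ^ (n / d) * Nat.factorial (n / d)) := by
  have hd0 : 0 < d := lt_trans one_pos hd1
  set k := n / d with hk
  have hnk : k * d = n := Nat.div_mul_cancel hdvd
  -- n ≥ 2 * d since d is a proper divisor
  have h2d : 2 * d ≤ n := by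
    obtain ⟨c, hc⟩ := hdvd
    have hc2 : 2 ≤ c := by
      rcases c with _ | _ | c
      · omega
      · omega
      · omega
    calc 2 * d = d * 2 := by ring
    _ ≤ d * c := Nat.mul_le_mul_left d hc2
    _ = n := hc.symm
  have hdrb : d < r ^ b := by omega
  have hkrb : k < r ^ b := by
    by_contra h
    push_neg at h
    have : 2 * r ^ b ≤ k * d := by
      calc 2 * r ^ b ≤ r ^ b * d := by nlinarith
      _ ≤ k * d := Nat.mul_le_mul_right d h
    omega
  set q := r ^ b / d with hq
  have hqd : q * d < r ^ b := by
    have hle : q * d ≤ r ^ b := Nat.div_mul_le_self _ _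
    rcases Nat.lt_or_ge (q * d) (r ^ b) with h | h
    · exact h
    · exfalso
      have heq : q * d = r ^ b := le_antisymm hle h
      have : d ∣ r ^ b := ⟨q, by rw [← heq]; ring⟩
      obtain ⟨c, _, hc⟩ := (Nat.dvd_prime_pow hr).mp this
      exact hdr ⟨c, hc⟩
  have hmod : r ^ b % d < d := Nat.mod_lt _ hd0
  have hdm : q * d + r ^ b % d = r ^ b := by
    rw [hq, Nat.mul_comm]
    exact Nat.div_add_mod _ _
  have hrqd : r ^ b < q * d + d := by omega
  have hqk : q < k := by
    have : q * d < k * d := by omega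
    exact Nat.lt_of_mul_lt_mul_right this
  -- key divisibility
  have key : r ∣ Nat.choose (q * d + d - 1) (d - 1) := by
    have h1d : q * d + d - 1 = q * d + (d - 1) := by omega
    rw [h1d]
    have hne : q * d + (d - 1) ≠ 0 := by omega
    have hlt : q * d + (d - 1) < r ^ (b + 1) := by
      have h2r : 2 ≤ r := hr.two_le
      have : r ^ b * 2 ≤ r ^ (b + 1) := by
        rw [pow_succ]
        exact Nat.mul_le_mul_left _ h2r
      omega
    have hlog : Nat.log r (q * d + (d - 1)) < b + 1 :=
      Nat.log_lt_of_lt_pow hne hlt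
    have hmul := hr.emultiplicity_choose' (n := q * d) (k := d - 1) (b := b + 1) hlog
    refine emultiplicity_ne_zero.mp ?_
    rw [hmul]
    have hbmem : b ∈ Finset.filter
        (fun i => r ^ i ≤ (d - 1) % r ^ i + (q * d) % r ^ i) (Finset.Ico 1 (b + 1)) := by
      refine Finset.mem_filter.mpr ⟨Finset.mem_Ico.mpr ⟨hb, Nat.lt_succ_self b⟩, ?_⟩
      rw [Nat.mod_eq_of_lt (by omega : d - 1 < r ^ b), Nat.mod_eq_of_lt hqd]
      omega
    have hcard : (Finset.filter
        (fun i => r ^ i ≤ (d - 1) % r ^ i + (q * d) % r ^ i) (Finset.Ico 1 (b + 1))).card ≠ 0 :=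
      Finset.card_ne_zero_of_mem hbmem
    exact_mod_cast hcard
  rw [← hnk, ← Nat.uniformBell_eq_div k (by omega : d ≠ 0), Nat.uniformBell_eq]
  exact dvd_trans key (Finset.dvd_prod_of_mem _ (Finset.mem_range.mpr hqk))
end

section
/- Let $p$ be a prime, $a \ge 1$, and suppose $d = p^a$ with $d$ a nontrivial proper divisor of $n$. Then for every $j \ge 1$, $p$ does not divide $\binom{jd - 1}{d - 1}$. -/
theorem stmt_8 (p a d n : ℕ) (hp : p.Prime) (ha : 1 ≤ a) (hd : d = p ^ a)
    (hd1 : 1 < d) (hdn : d < n) (hdvd : d ∣ n) :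
    ∀ j, 1 ≤ j → ¬ p ∣ Nat.choose (j * d - 1) (d - 1) := by
  intro j hj hdvd'
  subst hd
  set d := p ^ a with hd
  have hdpos : 0 < d := by positivity
  have hkn : d - 1 ≤ j * d - 1 := by
    have : d ≤ j * d := Nat.le_mul_of_pos_left d hj
    omega
  have hsub : j * d - 1 - (d - 1) = (j - 1) * d := by
    have : d ≤ j * d := Nat.le_mul_of_pos_left d hj
    cases j with
    | zero => omega
    | succ j' => simp [Nat.succ_mul]; omega
  have hzero : emultiplicity p ((j * d - 1).choose (d - 1)) = 0 := by
    rw [Nat.Prime.emultiplicity_choose hp hkn (Nat.lt_succ_self _)]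
    rw [hsub]
    simp only [Nat.cast_eq_zero, Finset.card_eq_zero, Finset.filter_eq_empty_iff]
    intro i hi
    simp only [Finset.mem_Ico] at hi
    push_neg
    rcases le_or_gt i a with hia | hia
    · have h1 : (d - 1) % p ^ i = p ^ i - 1 := by
        have : p ^ i ∣ d := pow_dvd_pow p hia
        obtain ⟨c, hc⟩ := this
        have hcpos : 0 < c := by
          rcases Nat.eq_zero_or_pos c with h | h
          · simp [h] at hc; omega
          · exact h
        have hpi : 0 < p ^ i := pow_pos hp.pos i
        rw [hc]
        rcases Nat.exists_eq_succ_of_ne_zero hcpos.ne' with ⟨c', rfl⟩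
        rw [Nat.mul_succ]
        rw [show p ^ i * c' + p ^ i - 1 = p ^ i * c' + (p ^ i - 1) by omega]
        rw [Nat.mul_add_mod]
        exact Nat.mod_eq_of_lt (by omega)
      have h2 : ((j - 1) * d) % p ^ i = 0 :=
        Nat.eq_zero_of_dvd_of_lt ((Nat.dvd_mod_iff (dvd_refl _)).mpr
          ((pow_dvd_pow p hia).trans (dvd_mul_left d (j - 1))))
          (Nat.mod_lt _ (pow_pos hp.pos i))
      have hpi : 0 < p ^ i := pow_pos hp.pos i
      omega
    · -- i > a : d ∣ stuff
      have hda : d ∣ ((j - 1) * d) % p ^ i := by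
        exact Nat.dvd_mod_iff (pow_dvd_pow p hia.le) |>.mpr ⟨j - 1, (mul_comm _ _)⟩
      have h1 : (d - 1) % p ^ i = d - 1 :=
        Nat.mod_eq_of_lt (lt_of_lt_of_le (by omega) (Nat.pow_le_pow_right hp.pos hia.le))
      have h2 : ((j - 1) * d) % p ^ i < p ^ i := Nat.mod_lt _ (pow_pos hp.pos i)
      have h3 : ((j - 1) * d) % p ^ i ≤ p ^ i - d := by
        obtain ⟨c, hc⟩ := hda
        have hdd : d ∣ p ^ i := pow_dvd_pow p hia.le
        obtain ⟨e, he⟩ := hdd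
        rw [hc] at h2 ⊢
        have : c < e := by
          by_contra h
          push_neg at h
          have : d * e ≤ d * c := Nat.mul_le_mul_left d h
          omega
        have : c + 1 ≤ e := this
        have hmul : d * (c + 1) ≤ d * e := Nat.mul_le_mul_left d this
        rw [Nat.mul_add, Nat.mul_one] at hmul
        have : d * c ≤ d * e - d := by omega
        rwa [← he] at this
      have hd_le : d ≤ p ^ i := Nat.pow_le_pow_right hp.pos hia.le
      omega
  rw [emultiplicity_eq_zero] at hzero
  exact hzero hdvd'
end

section
/- Let $p$ be a prime and $d = k p^a$ with $2 \le k \le p-1$ and $a \ge 0$. Then there exists $j \ge 1$ with $j \le p$ such that $p$ divides $\binom{jd-1}{d-1}$. -/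
private lemma stmt9_div_helper (m q : ℕ) (hm : 1 ≤ m) (hq : 1 ≤ q) : (m * q - 1) / q = m - 1 := by
  have h1 : (m - 1) * q = m * q - q := by rw [Nat.sub_mul, one_mul]
  have h2 : q ≤ m * q := Nat.le_mul_of_pos_left q (by omega)
  have h3 : m * q - 1 = (q - 1) + (m - 1) * q := by omega
  rw [h3, Nat.add_mul_div_right _ _ (by omega), Nat.div_eq_of_lt (by omega)]
  omega

theorem stmt_9 (p k a d : ℕ) (hp : p.Prime) (hk2 : 2 ≤ k) (hkp : k ≤ p - 1)
    (hd : d = k * p ^ a) :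
    ∃ j, 1 ≤ j ∧ j ≤ p ∧ p ∣ Nat.choose (j * d - 1) (d - 1) := by
  haveI : Fact p.Prime := ⟨hp⟩
  have hp2 : 2 ≤ p := hp.two_le
  have hkp' : k < p := by omega
  have hkne : (k : ZMod p) ≠ 0 := by
    intro h
    rw [ZMod.natCast_eq_zero_iff] at h
    exact absurd (Nat.le_of_dvd (by omega) h) (by omega)
  set j : ℕ := ((k : ZMod p)⁻¹).val with hj
  have hjcast : ((j : ℕ) : ZMod p) = (k : ZMod p)⁻¹ := ZMod.natCast_val _ |>.trans (ZMod.cast_id _ _)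
  have hjk1 : ((j * k : ℕ) : ZMod p) = 1 := by
    push_cast
    rw [hjcast, inv_mul_cancel₀ hkne]
  have hjkmod : (j * k) % p = 1 := by
    have := (ZMod.natCast_eq_natCast_iff (j * k) 1 p).mp (by simpa using hjk1)
    simpa [Nat.ModEq, Nat.mod_eq_of_lt hp2] using this
  have hj1 : 1 ≤ j := by
    rcases Nat.eq_zero_or_pos j with h | h
    · exfalso; rw [h, Nat.zero_mul, Nat.zero_mod] at hjkmod; omega
    · exact h
  have hjp : j ≤ p := le_of_lt (ZMod.val_lt _)
  refine ⟨j, hj1, hjp, ?_⟩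
  -- setup
  have hq1 : 1 ≤ p ^ a := Nat.one_le_pow _ _ (by omega)
  set N := j * d - 1 with hN
  set M := d - 1 with hM
  have hjk : 1 ≤ j * k := Nat.one_le_iff_ne_zero.mpr (by positivity)
  have hNdiv : N / p ^ a = j * k - 1 := by
    rw [hN, hd, ← Nat.mul_assoc]; exact stmt9_div_helper (j * k) (p ^ a) hjk hq1
  have hMdiv : M / p ^ a = k - 1 := by
    rw [hM, hd]; exact stmt9_div_helper k (p ^ a) (by omega) hq1
  have hNdigit : N / p ^ a % p = 0 := by
    rw [hNdiv]
    have := Nat.div_add_mod (j * k) p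
    rw [hjkmod] at this
    have h4 : j * k - 1 = p * (j * k / p) := by omega
    rw [h4, Nat.mul_mod_right]
  have hMdigit : M / p ^ a % p = k - 1 := by
    rw [hMdiv, Nat.mod_eq_of_lt (by omega)]
  -- Lucas / Kummer argument
  have h1 := Choose.choose_modEq_choose_mul_prod_range_choose (n := N) (k := M) (p := p) a
  have h2 := Choose.choose_modEq_choose_mod_mul_choose_div_nat
    (n := N / p ^ a) (k := M / p ^ a) (p := p)
  have hz : Nat.choose (N / p ^ a % p) (M / p ^ a % p) = 0 := by
    rw [hNdigit, hMdigit]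
    exact Nat.choose_eq_zero_of_lt (by omega)
  have hdvd2 : p ∣ Nat.choose (N / p ^ a) (M / p ^ a) := by
    have : Nat.choose (N / p ^ a) (M / p ^ a) ≡ 0 [MOD p] := by
      calc Nat.choose (N / p ^ a) (M / p ^ a)
          ≡ Nat.choose (N / p ^ a % p) (M / p ^ a % p) *
            Nat.choose (N / p ^ a / p) (M / p ^ a / p) [MOD p] := h2
        _ = 0 := by rw [hz, Nat.zero_mul]
    exact (Nat.modEq_zero_iff_dvd).mp this
  have hdvdZ : (p : ℤ) ∣ (Nat.choose N M : ℤ) := by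
    have hrhs : (p : ℤ) ∣ (Nat.choose (N / p ^ a) (M / p ^ a) : ℤ) *
        ∏ i ∈ Finset.range a, (Nat.choose (N / p ^ i % p) (M / p ^ i % p) : ℤ) :=
      Dvd.dvd.mul_right (Int.natCast_dvd_natCast.mpr hdvd2) _
    have hsub := h1.dvd
    exact (Int.dvd_iff_dvd_of_dvd_sub hsub).mp (by push_cast; exact hrhs)
  exact_mod_cast hdvdZ
end

section
/- Suppose $n \ge 9$ is not a prime power, and suppose $p$ and $r$ are primes such that every binomial coefficient $\binom{n}{k}$ with $1 \le k \le n-1$ is divisible by $p$ or by $r$. If $d$ is a nontrivial proper divisor of $n$, then $\frac{n!}{(d!)^{n/d}(n/d)!}$ is divisible by $p$ or by $r$. -/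
/-!
Write `S_q` for the base-`q` digit sum and let `n = d m`, so that the quotient in question is
`U = uniformBell m d`. Legendre's formula gives `(q - 1) v_q(U) = m S_q(d) + S_q(m) - m - S_q(n)`,
and `S_q` is subadditive and submultiplicative, so `q ∤ U` forces either `S_q(d) = 1`, i.e. `d`
is a power of `q`, or `S_q(n) = m S_q(d)`. In the second case Kummer's theorem shows
`q ∤ choose n (d c)` for every `c ≤ m`. In the first, Lucas's theorem gives
`choose n (d c) ≡ choose m c [MOD q]`, and since `m` is not a power of `q` (as `n` is not), some
`0 < c < m` has `q ∤ choose m c`. Since `d > 1` is a power of at most one prime, a single `c`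
serves both `p` and `r`, contradicting the hypothesis on `choose n (d c)`.
-/

open Nat

theorem digit_sum_add_le {q : ℕ} (hq : q.Prime) (a b : ℕ) :
    (q.digits (a + b)).sum ≤ (q.digits a).sum + (q.digits b).sum := by
  have := Fact.mk hq
  have hchoose : (a + b).choose b ≠ 0 := (choose_pos (le_add_left b a)).ne'
  have hv : padicValNat q (a ! * b !) ≤ padicValNat q (a + b)! := by
    rw [← add_choose_mul_factorial_mul_factorial, mul_assoc,
      padicValNat.mul hchoose (by positivity)]
    exact le_add_self
  rw [padicValNat.mul (by positivity) (by positivity)] at hv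
  have h := Nat.mul_le_mul_left (q - 1) hv
  rw [mul_add, sub_one_mul_padicValNat_factorial, sub_one_mul_padicValNat_factorial,
    sub_one_mul_padicValNat_factorial] at h
  have := digit_sum_le q a
  have := digit_sum_le q b
  have := digit_sum_le q (a + b)
  omega

theorem digit_sum_mul_le_left {q : ℕ} (hq : q.Prime) (k a : ℕ) :
    (q.digits (k * a)).sum ≤ k * (q.digits a).sum := by
  induction k with
  | zero => simp
  | succ k ih =>
    rw [succ_mul, succ_mul]
    exact (digit_sum_add_le hq _ _).trans (by omega)

theorem digit_sum_base_mul {q : ℕ} (hq : 1 < q) (a : ℕ) :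
    (q.digits (q * a)).sum = (q.digits a).sum := by
  rcases Nat.eq_zero_or_pos a with rfl | ha
  · simp
  · simp [digits_base_mul hq ha]

theorem digit_sum_mul_le {q : ℕ} (hq : q.Prime) (a b : ℕ) :
    (q.digits (a * b)).sum ≤ (q.digits a).sum * (q.digits b).sum := by
  induction a using Nat.strong_induction_on with
  | _ a ih =>
  rcases Nat.eq_zero_or_pos a with rfl | ha
  · simp
  have hsplit : a * b = a % q * b + q * (a / q * b) := by
    conv_lhs => rw [← Nat.mod_add_div a q]
    ring
  calc (q.digits (a * b)).sum
      ≤ a % q * (q.digits b).sum + (q.digits (a / q * b)).sum := by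
        rw [hsplit, ← digit_sum_base_mul hq.one_lt (a / q * b)]
        exact (digit_sum_add_le hq _ _).trans (by grw [digit_sum_mul_le_left hq])
    _ ≤ a % q * (q.digits b).sum + (q.digits (a / q)).sum * (q.digits b).sum := by
        grw [ih _ (Nat.div_lt_self ha hq.one_lt)]
    _ = (q.digits a).sum * (q.digits b).sum := by
        rw [digits_def' hq.one_lt ha, List.sum_cons, add_mul]

theorem digit_sum_pos {q : ℕ} (hq : q.Prime) {a : ℕ} (ha : a ≠ 0) : 0 < (q.digits a).sum := by
  have := Fact.mk hq
  have := sub_one_mul_padicValNat_factorial_lt_of_ne_zero q ha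
  rw [sub_one_mul_padicValNat_factorial] at this
  omega

theorem exists_eq_pow_of_digit_sum_eq_one {q : ℕ} (hq : q.Prime) {a : ℕ}
    (ha : (q.digits a).sum = 1) : ∃ k, a = q ^ k := by
  induction a using Nat.strong_induction_on with
  | _ a ih =>
  rcases lt_or_ge a q with haq | haq
  · refine ⟨0, ?_⟩
    rcases Nat.eq_zero_or_pos a with rfl | hpos
    · simp at ha
    · simpa [digits_of_lt q a hpos.ne' haq] using ha
  have hpos : 0 < a := hq.pos.trans_le haq
  rw [digits_def' hq.one_lt hpos, List.sum_cons] at ha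
  have := digit_sum_pos hq (Nat.div_pos haq hq.pos).ne'
  obtain ⟨k, hk⟩ := ih (a / q) (Nat.div_lt_self hpos hq.one_lt) (by omega)
  refine ⟨k + 1, ?_⟩
  rw [pow_succ, ← hk, Nat.div_mul_cancel (Nat.dvd_of_mod_eq_zero (by omega))]

theorem not_dvd_choose_of_digit_sum_le {q n k : ℕ} (hq : q.Prime) (hkn : k ≤ n)
    (h : (q.digits k).sum + (q.digits (n - k)).sum ≤ (q.digits n).sum) :
    ¬ q ∣ n.choose k := by
  have := Fact.mk hq
  have hv := sub_one_mul_padicValNat_choose_eq_sub_sum_digits (p := q) hkn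
  rw [Nat.sub_eq_zero_of_le h, mul_eq_zero, Nat.sub_eq_zero_iff_le] at hv
  rw [dvd_iff_padicValNat_ne_zero (choose_pos hkn).ne', not_not]
  exact hv.resolve_left hq.one_lt.not_ge

theorem sub_one_mul_padicValNat_uniformBell {q : ℕ} (hq : q.Prime) (m : ℕ) {d : ℕ}
    (hd : d ≠ 0) :
    (q - 1) * padicValNat q (uniformBell m d) + m + (q.digits (d * m)).sum =
      m * (q.digits d).sum + (q.digits m).sum := by
  have := Fact.mk hq
  have hU : uniformBell m d ≠ 0 := by
    intro h
    exact factorial_ne_zero _ (by simpa [h] using (uniformBell_mul_eq m hd).symm)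
  have hv : padicValNat q (d * m)! =
      padicValNat q (uniformBell m d) + m * padicValNat q d ! + padicValNat q m ! := by
    rw [mul_comm d m, ← uniformBell_mul_eq m hd, padicValNat.mul (by positivity) (by positivity),
      padicValNat.mul hU (by positivity), padicValNat.pow]
  have h := congrArg ((q - 1) * ·) hv
  simp only [mul_add, mul_left_comm (q - 1) m, sub_one_mul_padicValNat_factorial] at h
  have := digit_sum_le q d
  have := digit_sum_le q m
  have := digit_sum_le q (d * m)
  have : m * (d - (q.digits d).sum) + m * (q.digits d).sum = d * m := by
    rw [← mul_add, Nat.sub_add_cancel (digit_sum_le q d), mul_comm]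
  omega

theorem digit_sum_mul_eq_of_not_dvd_uniformBell {q m d : ℕ} (hq : q.Prime) (hd : d ≠ 0)
    (hdq : (q.digits d).sum ≠ 1) (hU : ¬ q ∣ uniformBell m d) :
    (q.digits (d * m)).sum = m * (q.digits d).sum := by
  have h := sub_one_mul_padicValNat_uniformBell hq m hd
  rw [padicValNat.eq_zero_of_not_dvd hU, mul_zero, zero_add] at h
  have := digit_sum_mul_le hq d m
  have := digit_sum_le q m
  have := digit_sum_pos hq hd
  -- `S_q(d m) ≤ S_q(d) S_q(m)` turns `h` into `(m - S_q(m)) (S_q(d) - 1) ≤ 0`, so `S_q(m) = m`.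
  have hdq2 : 2 ≤ (q.digits d).sum := by omega
  have hm : (q.digits m).sum = m := by nlinarith
  omega

theorem not_dvd_choose_mul_of_digit_sum_ne_one {q m d c : ℕ} (hq : q.Prime) (hd : d ≠ 0)
    (hdq : (q.digits d).sum ≠ 1) (hU : ¬ q ∣ uniformBell m d) (hcm : c ≤ m) :
    ¬ q ∣ (d * m).choose (d * c) := by
  refine not_dvd_choose_of_digit_sum_le hq (Nat.mul_le_mul_left d hcm) ?_
  rw [← Nat.mul_sub, digit_sum_mul_eq_of_not_dvd_uniformBell hq hd hdq hU, mul_comm d c,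
    mul_comm d (m - c)]
  calc (q.digits (c * d)).sum + (q.digits ((m - c) * d)).sum
      ≤ c * (q.digits d).sum + (m - c) * (q.digits d).sum :=
        Nat.add_le_add (digit_sum_mul_le_left hq c d) (digit_sum_mul_le_left hq _ d)
    _ = m * (q.digits d).sum := by rw [← add_mul, Nat.add_sub_cancel' hcm]

theorem not_dvd_choose_mul_of_not_dvd_uniformBell {q m d c : ℕ} (hq : q.Prime) (hd : d ≠ 0)
    (hU : ¬ q ∣ uniformBell m d) (hcm : c ≤ m) (hpow : ∀ k, d = q ^ k → ¬ q ∣ m.choose c) :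
    ¬ q ∣ (d * m).choose (d * c) := by
  by_cases hdq : (q.digits d).sum = 1
  · have := Fact.mk hq
    obtain ⟨k, rfl⟩ := exists_eq_pow_of_digit_sum_eq_one hq hdq
    rw [(Choose.choose_pow_mul_pow_mul_modEq_choose_nat).dvd_iff dvd_rfl]
    exact hpow k rfl
  · exact not_dvd_choose_mul_of_digit_sum_ne_one hq hd hdq hU hcm

theorem exists_not_dvd_choose_of_ne_pow {q m : ℕ} (hq : q.Prime) (hm : 0 < m)
    (h : ∀ k, m ≠ q ^ k) : ∃ c, 0 < c ∧ c < m ∧ ¬ q ∣ m.choose c := by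
  have := Fact.mk hq
  by_contra! H
  refine h _ (Choose.eq_pow_multiplicity_of_choose_modEq_zero_nat hm fun i hi => ?_)
  rw [Finset.mem_Icc] at hi
  exact Nat.modEq_zero_iff_dvd.mpr (H i (by omega) (by omega))

theorem exists_forall_not_dvd_choose {m d : ℕ} (hd : 1 < d) (hm : 1 < m)
    (hdm : ¬ ∃ q k, q.Prime ∧ d * m = q ^ k) :
    ∃ c, 0 < c ∧ c < m ∧ ∀ q k, q.Prime → d = q ^ k → ¬ q ∣ m.choose c := by
  by_cases hd' : ∃ q k, q.Prime ∧ d = q ^ k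
  · obtain ⟨q, k, hq, rfl⟩ := hd'
    have hk : k ≠ 0 := by rintro rfl; simp at hd
    obtain ⟨c, hc0, hcm, hc⟩ := exists_not_dvd_choose_of_ne_pow hq (zero_lt_one.trans hm)
      fun j hj => hdm ⟨q, k + j, hq, by rw [hj, pow_add]⟩
    refine ⟨c, hc0, hcm, fun ℓ j hℓ hj => ?_⟩
    have hj0 : j ≠ 0 := by rintro rfl; rw [pow_zero] at hj; omega
    obtain ⟨rfl, -⟩ := hq.pow_inj' hℓ hk hj0 hj
    exact hc
  · exact ⟨1, one_pos, hm, fun q k hq hdk => (hd' ⟨q, k, hq, hdk⟩).elim⟩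

theorem stmt_11_general (n p r : ℕ)
    (hnpp : ¬ ∃ (q a : ℕ), q.Prime ∧ n = q ^ a)
    (hp : p.Prime) (hr : r.Prime)
    (hdiv : ∀ k, 1 ≤ k → k ≤ n - 1 → p ∣ Nat.choose n k ∨ r ∣ Nat.choose n k)
    (d : ℕ) (hd1 : 1 < d) (hdn : d < n) (hdvd : d ∣ n) :
    p ∣ Nat.factorial n / (Nat.factorial d ^ (n / d) * Nat.factorial (n / d)) ∨
    r ∣ Nat.factorial n / (Nat.factorial d ^ (n / d) * Nat.factorial (n / d)) := by
  obtain ⟨m, rfl⟩ := hdvd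
  have hd : d ≠ 0 := by omega
  have hm : 1 < m := Nat.lt_of_mul_lt_mul_left (a := d) (by rwa [mul_one])
  rw [Nat.mul_div_cancel_left m (by omega), mul_comm d m, ← uniformBell_eq_div m hd]
  by_contra! hU
  obtain ⟨c, hc0, hcm, hc⟩ := exists_forall_not_dvd_choose hd1 hm hnpp
  have hdc : 0 < d * c := Nat.mul_pos (by omega) hc0
  have hdcm : d * c < d * m := Nat.mul_lt_mul_of_pos_left hcm (by omega)
  rcases hdiv (d * c) hdc (by omega) with h | h
  · exact not_dvd_choose_mul_of_not_dvd_uniformBell hp hd hU.1 hcm.le (hc p · hp) h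
  · exact not_dvd_choose_mul_of_not_dvd_uniformBell hr hd hU.2 hcm.le (hc r · hr) h

theorem stmt_11 (n p r : ℕ) (hn : 9 ≤ n)
    (hnpp : ¬ ∃ (q a : ℕ), q.Prime ∧ n = q ^ a)
    (hp : p.Prime) (hr : r.Prime)
    (hdiv : ∀ k, 1 ≤ k → k ≤ n - 1 → p ∣ Nat.choose n k ∨ r ∣ Nat.choose n k)
    (d : ℕ) (hd1 : 1 < d) (hdn : d < n) (hdvd : d ∣ n) :
    p ∣ Nat.factorial n / (Nat.factorial d ^ (n / d) * Nat.factorial (n / d)) ∨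
    r ∣ Nat.factorial n / (Nat.factorial d ^ (n / d) * Nat.factorial (n / d)) :=
  stmt_11_general n p r hnpp hp hr hdiv d hd1 hdn hdvd
end

section
/- If $n \ge 9$ is not a prime power and $p, r$ are primes such that every $\binom{n}{k}$ with $1 \le k \le n-1$ is divisible by $p$ or $r$, then $p \ne r$ and $\min(p, r) \le n - 3$. -/
/-- By Lucas's theorem, `C(p^a * m, p^a) ≡ m [MOD p]`. -/
lemma aux_lucas_pow (p : ℕ) (hp : p.Prime) (a m : ℕ) :
    Nat.choose (p ^ a * m) (p ^ a) ≡ m [MOD p] := by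
  haveI : Fact p.Prime := ⟨hp⟩
  induction a with
  | zero => simpa [Nat.choose_one_right] using Nat.ModEq.refl m
  | succ a ih =>
    have h := Choose.choose_modEq_choose_mod_mul_choose_div_nat
      (p := p) (n := p ^ (a + 1) * m) (k := p ^ (a + 1))
    have e1 : p ^ (a + 1) * m = p * (p ^ a * m) := by ring
    have e2 : p ^ (a + 1) = p * p ^ a := by ring
    rw [e1, e2, Nat.mul_mod_right, Nat.mul_mod_right,
      Nat.mul_div_cancel_left _ hp.pos, Nat.mul_div_cancel_left _ hp.pos,
      Nat.choose_self, one_mul] at h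
    rw [e1, e2]
    exact h.trans ih

theorem stmt_12 (n p r : ℕ) (hn : 9 ≤ n)
    (hnpp : ¬ ∃ (q a : ℕ), q.Prime ∧ n = q ^ a)
    (hp : p.Prime) (hr : r.Prime)
    (hdiv : ∀ k, 1 ≤ k → k ≤ n - 1 → p ∣ Nat.choose n k ∨ r ∣ Nat.choose n k) :
    p ≠ r ∧ min p r ≤ n - 3 := by
  have hn0 : n ≠ 0 := by omega
  -- A prime dividing n is at most n - 3.
  have key : ∀ q : ℕ, q.Prime → q ∣ n → q ≤ n - 3 := by
    intro q hq hqn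
    have hqne : q ≠ n := by
      rintro rfl
      exact hnpp ⟨q, 1, hq, (pow_one q).symm⟩
    have hqlt : q < n := lt_of_le_of_ne (Nat.le_of_dvd (by omega) hqn) hqne
    obtain ⟨c, hc⟩ := hqn
    have hc2 : 2 ≤ c := by
      rcases Nat.lt_or_ge c 2 with h | h
      · interval_cases c <;> omega
      · exact h
    have : 2 * q ≤ n := by
      calc 2 * q = q * 2 := by ring
      _ ≤ q * c := Nat.mul_le_mul_left q hc2
      _ = n := hc.symm
    omega
  -- From k = 1 : p ∣ n or r ∣ n.
  have h1 : p ∣ n ∨ r ∣ n := by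
    have := hdiv 1 le_rfl (by omega)
    simpa [Nat.choose_one_right] using this
  have hmin : min p r ≤ n - 3 := by
    rcases h1 with h | h
    · exact le_trans (min_le_left p r) (key p hp h)
    · exact le_trans (min_le_right p r) (key r hr h)
  refine ⟨?_, hmin⟩
  -- Now show p ≠ r.
  rintro rfl
  have hpn : p ∣ n := by tauto
  -- write n = p ^ a * m with p ∤ m
  set a := n.factorization p with ha
  set m := n / p ^ a with hm
  have hord : p ^ a * m = n := Nat.ordProj_mul_ordCompl_eq_self n p
  have hpm : ¬ p ∣ m := Nat.not_dvd_ordCompl hp hn0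
  have hm0 : m ≠ 0 := by
    rintro h
    rw [h, mul_zero] at hord
    omega
  have hm1 : m ≠ 1 := by
    intro h
    exact hnpp ⟨p, a, hp, by rw [← hord, h, mul_one]⟩
  have hm2 : 2 ≤ m := (Nat.two_le_iff m).mpr ⟨hm0, hm1⟩
  have hpa1 : 1 ≤ p ^ a := Nat.one_le_pow _ _ hp.pos
  have hpan : p ^ a ≤ n - 1 := by
    have : 2 * p ^ a ≤ n := by
      calc 2 * p ^ a = p ^ a * 2 := by ring
      _ ≤ p ^ a * m := Nat.mul_le_mul_left _ hm2
      _ = n := hord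
    omega
  have hdvdc : p ∣ Nat.choose n (p ^ a) := by
    rcases hdiv (p ^ a) hpa1 hpan with h | h <;> exact h
  have hmod : Nat.choose n (p ^ a) ≡ m [MOD p] := by
    rw [← hord]; exact aux_lucas_pow p hp a m
  have : p ∣ m := (Nat.modEq_zero_iff_dvd.mpr hdvdc).symm.trans hmod |>.symm
    |> Nat.modEq_zero_iff_dvd.mp
  exact hpm this
end

section
/- For every $a \ge 3$ and $n = 2^a$, there do not exist conjugacy classes $C$ and $D$ of $A_n$, both consisting of elements of prime order, such that $\langle c, d \rangle = A_n$ for all $(c,d) \in C \times D$. -/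
/-!
If every pair of conjugates of `c` and `d` generated `A_n`, no proper subgroup `K` of `S_n` could
contain `A_n`-conjugates of both. Conjugates under permutations of equal sign suffice, since
conjugation by a permutation is an automorphism of `A_n`; and for an involution `c` moving a point,
which commutes with an odd transposition, any `S_n`-conjugate of `c` will do.

If `c` and `d` both fix a point, take `K` to be a point stabiliser. Otherwise, say `c` is a
derangement; its prime order divides `n = 2 ^ a`, so `c` is a fixed-point-free involution. If `d`
fixes two points, take the stabiliser of that pair, which contains a conjugate of `c` swapping
them. If `d` fixes at most one point, identify the points with `𝔽_{2^a}`: by counting cycles, `d`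
is conjugate to `x ↦ x + 1` or to some `x ↦ ζ x`, and `c` to `x ↦ x + 1`. So take `K = AGL(1, 2^a)`,
which misses the 3-cycles fixing `0` and `1`.
-/

open Equiv Equiv.Perm Subgroup MulAction Pointwise
open scoped Finset

section InvariableGeneration

variable {G H : Type*} [Group G] [Group H]

def InvariablyGenerates (c d : G) : Prop :=
  ∀ c' d' : G, IsConj c c' → IsConj d d' → closure {c', d'} = ⊤

namespace InvariablyGenerates

variable {c d : G}

theorem symm (h : InvariablyGenerates c d) : InvariablyGenerates d c := by
  intro d' c' hd hc
  rw [Set.pair_comm]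
  exact h c' d' hc hd

theorem map (h : InvariablyGenerates c d) (φ : G ≃* H) : InvariablyGenerates (φ c) (φ d) := by
  intro c' d' hc hd
  have hc' := φ.symm.toMonoidHom.map_isConj hc
  have hd' := φ.symm.toMonoidHom.map_isConj hd
  simp only [MulEquiv.coe_toMonoidHom, MulEquiv.symm_apply_apply] at hc' hd'
  have := congrArg (Subgroup.map φ.toMonoidHom) (h _ _ hc' hd')
  rwa [MonoidHom.map_closure, Set.image_pair, MulEquiv.coe_toMonoidHom, φ.apply_symm_apply,
    φ.apply_symm_apply, map_top_of_surjective _ φ.surjective] at this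

theorem eq_top (h : InvariablyGenerates c d) {K : Subgroup G} {c' d' : G} (hc : IsConj c c')
    (hd : IsConj d d') (hc' : c' ∈ K) (hd' : d' ∈ K) : K = ⊤ :=
  top_le_iff.mp <| h c' d' hc hd ▸ (closure_le K).mpr (Set.pair_subset hc' hd')

end InvariablyGenerates

end InvariableGeneration

section Perm

variable {α : Type*} [DecidableEq α]

theorem commute_swap_apply_self {σ : Perm α} (hσ : σ * σ = 1) (x : α) :
    Commute (swap x (σ x)) σ := by
  have : σ * swap x (σ x) * σ⁻¹ = swap x (σ x) := by
    rw [← swap_apply_apply, ← Perm.mul_apply, hσ, one_apply, swap_comm]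
  exact (mul_inv_eq_iff_eq_mul.mp this).symm

variable [Fintype α]

theorem InvariablyGenerates.alternatingGroup_le {c d : alternatingGroup α}
    (h : InvariablyGenerates c d) {K : Subgroup (Perm α)} {u v : Perm α}
    (huv : sign u = sign v) (hu : u * c * u⁻¹ ∈ K) (hv : v * d * v⁻¹ ∈ K) :
    alternatingGroup α ≤ K := by
  have hc : sign (c : Perm α) = 1 := c.2
  have hconj : IsConj (MulAut.conjNormal v c) ⟨u * c * u⁻¹, by simp [mem_alternatingGroup, hc]⟩ :=
    isConj_iff.mpr ⟨⟨u * v⁻¹, by simp [mem_alternatingGroup, huv]⟩, Subtype.ext (by simp; group)⟩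
  have htop := (h.map (MulAut.conjNormal v)).eq_top (K := K.comap (alternatingGroup α).subtype)
    hconj (IsConj.refl _) hu hv
  intro x hx
  exact (eq_top_iff.mp htop) (mem_top ⟨x, hx⟩)

theorem exists_sign_eq_and_conj_eq_of_commute {σ ρ τ : Perm α} (h : IsConj σ ρ)
    (hτ : sign τ = -1) (hcomm : Commute τ σ) (s : ℤˣ) : ∃ u, sign u = s ∧ u * σ * u⁻¹ = ρ := by
  obtain ⟨g, rfl⟩ := isConj_iff.mp h
  rcases Int.units_eq_one_or (sign g * s) with hs | hs
  · exact ⟨g, (mul_eq_one_iff_eq_inv.mp hs).trans (Int.units_inv_eq_self s), rfl⟩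
  · refine ⟨g * τ, by rw [map_mul, hτ, ← hs, ← mul_assoc, Int.units_mul_self, one_mul], ?_⟩
    calc g * τ * σ * (g * τ)⁻¹ = g * (τ * σ * τ⁻¹) * g⁻¹ := by group
      _ = g * σ * g⁻¹ := by rw [hcomm.eq, mul_inv_cancel_right]

theorem InvariablyGenerates.alternatingGroup_le_of_isConj {c d : alternatingGroup α}
    (h : InvariablyGenerates c d) {x : α} (hc : (c : Perm α) * c = 1) (hx : (c : Perm α) x ≠ x)
    {K : Subgroup (Perm α)} {X Y : Perm α} (hcX : IsConj (c : Perm α) X)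
    (hdY : IsConj (d : Perm α) Y) (hX : X ∈ K) (hY : Y ∈ K) : alternatingGroup α ≤ K := by
  obtain ⟨v, rfl⟩ := isConj_iff.mp hdY
  obtain ⟨u, hu, rfl⟩ := exists_sign_eq_and_conj_eq_of_commute hcX (sign_swap hx.symm)
    (commute_swap_apply_self hc x) (sign v)
  exact h.alternatingGroup_le hu hX hY

theorem exists_sign_eq_one_apply_eq (hα : 3 ≤ Fintype.card α) (x y : α) :
    ∃ g : Perm α, sign g = 1 ∧ g x = y := by
  have := alternatingGroup.isPretransitive_of_three_le_card α (by rwa [Nat.card_eq_fintype_card])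
  obtain ⟨g, hg⟩ := exists_smul_eq (alternatingGroup α) x y
  exact ⟨g, g.2, hg⟩

theorem not_invariablyGenerates_of_apply_eq_self (hα : 3 ≤ Fintype.card α)
    {c d : alternatingGroup α} {x y : α} (hx : (c : Perm α) x = x) (hy : (d : Perm α) y = y) :
    ¬ InvariablyGenerates c d := by
  intro h
  obtain ⟨g, hg, rfl⟩ := exists_sign_eq_one_apply_eq hα y x
  have hle := h.alternatingGroup_le (K := stabilizer (Perm α) (g y)) (u := 1) (v := g)
    (by rw [hg, Perm.sign_one]) (by simpa [mem_stabilizer_iff] using hx)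
    (by simp [mem_stabilizer_iff, hy])
  obtain ⟨z, hz⟩ := Fintype.exists_ne_of_one_lt_card (by omega) (g y)
  obtain ⟨k, hk, rfl⟩ := exists_sign_eq_one_apply_eq hα (g y) z
  exact hz (mem_stabilizer_iff.mp (hle hk))

theorem not_invariablyGenerates_of_two_apply_eq_self (hα : 3 ≤ Fintype.card α)
    {c d : alternatingGroup α} {x y₁ y₂ : α} (hc : (c : Perm α) * c = 1)
    (hx : (c : Perm α) x ≠ x) (hy : y₁ ≠ y₂) (hy₁ : (d : Perm α) y₁ = y₁)
    (hy₂ : (d : Perm α) y₂ = y₂) : ¬ InvariablyGenerates c d := by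
  intro h
  obtain ⟨g, hg₁, hg₂⟩ :=
    is_two_pretransitive_iff.mp (Perm.isMultiplyPretransitive α 2) hx.symm hy
  rw [Perm.smul_def] at hg₁ hg₂
  have hcc : (c : Perm α) ((c : Perm α) x) = x := by rw [← Perm.mul_apply, hc, one_apply]
  have hle := h.alternatingGroup_le_of_isConj hc hx
    (K := stabilizer (Perm α) ({y₁, y₂} : Set α)) (isConj_iff.mpr ⟨g, rfl⟩) (IsConj.refl _)
    (by simp [mem_stabilizer_iff, Set.smul_set_insert, ← hg₁, ← hg₂, hcc, Set.pair_comm])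
    (by simp [mem_stabilizer_iff, Set.smul_set_insert, hy₁, hy₂])
  obtain ⟨z, -, hz⟩ := Finset.exists_mem_notMem_of_card_lt_card
    (s := {y₁, y₂}) (t := Finset.univ) (Finset.card_le_two.trans_lt (by rwa [Finset.card_univ]))
  obtain ⟨k, hk, rfl⟩ := exists_sign_eq_one_apply_eq hα y₁ z
  have hk₁ := Set.smul_mem_smul_set (a := k) (Set.mem_insert y₁ {y₂})
  rw [mem_stabilizer_iff.mp (hle hk)] at hk₁
  exact hz (by simpa using hk₁)

theorem card_support_eq_mul_orderOf {σ : Perm α} (hσ : (orderOf σ).Prime) :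
    #σ.support = Multiset.card σ.cycleType * orderOf σ := by
  obtain ⟨n, hn⟩ := cycleType_prime_order hσ
  rw [← sum_cycleType, hn, Multiset.sum_replicate, Multiset.card_replicate, smul_eq_mul]

theorem isConj_of_orderOf_eq_prime {σ τ : Perm α} {p : ℕ} [hp : Fact p.Prime]
    (hσ : orderOf σ = p) (hτ : orderOf τ = p) (h : #σ.support = #τ.support) : IsConj σ τ := by
  have hσ' := card_support_eq_mul_orderOf (hσ ▸ hp.out)
  have hτ' := card_support_eq_mul_orderOf (hτ ▸ hp.out)
  have hcard : Multiset.card σ.cycleType = Multiset.card τ.cycleType :=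
    Nat.eq_of_mul_eq_mul_right hp.out.pos (by rw [← hσ, ← hσ', h, hτ', hτ, hσ])
  rw [isConj_iff_cycleType_eq, cycleType_of_pow_prime_eq_one (hσ ▸ pow_orderOf_eq_one σ),
    cycleType_of_pow_prime_eq_one (σ := τ) (hτ ▸ pow_orderOf_eq_one τ), hcard]

end Perm

section AffineGroup

variable (F : Type*) [Field F]

def affineGroup : Subgroup (Perm F) where
  carrier := {σ | ∃ r ≠ 0, ∃ s, ∀ x, σ x = r * x + s}
  one_mem' := ⟨1, one_ne_zero, 0, fun x => by simp⟩
  mul_mem' := by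
    rintro σ τ ⟨r, hr, s, hσ⟩ ⟨r', hr', s', hτ⟩
    exact ⟨r * r', mul_ne_zero hr hr', r * s' + s, fun x => by rw [Perm.mul_apply, hσ, hτ]; ring⟩
  inv_mem' := by
    rintro σ ⟨r, hr, s, hσ⟩
    refine ⟨r⁻¹, inv_ne_zero hr, -(r⁻¹ * s), fun x => ?_⟩
    obtain ⟨y, rfl⟩ := σ.surjective x
    rw [show σ⁻¹ (σ y) = y from σ.symm_apply_apply y, hσ]
    field_simp
    ring

variable {F}

theorem addRight_mem_affineGroup (a : F) : Equiv.addRight a ∈ affineGroup F :=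
  ⟨1, one_ne_zero, a, fun x => by simp⟩

theorem toPerm_mem_affineGroup (u : Fˣ) : MulAction.toPerm u ∈ affineGroup F :=
  ⟨u, u.ne_zero, 0, fun x => by simp [Units.smul_def]⟩

theorem eq_one_of_mem_affineGroup {σ : Perm F} (hσ : σ ∈ affineGroup F) (h₀ : σ 0 = 0)
    (h₁ : σ 1 = 1) : σ = 1 := by
  obtain ⟨r, -, s, hσ⟩ := hσ
  have hs : s = 0 := by simpa [hσ] using h₀
  have hr : r = 1 := by simpa [hσ, hs] using h₁
  ext x
  simp [hσ, hs, hr]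

variable [Fintype F]

theorem orderOf_addRight_one : orderOf (Equiv.addRight (1 : F)) = ringChar F := by
  obtain ⟨-, hp, -⟩ := FiniteField.card F (ringChar F)
  have : Fact (ringChar F).Prime := ⟨hp⟩
  have hpow (n : ℕ) : Equiv.addRight (1 : F) ^ n = Equiv.addRight (n : F) := by
    induction n with
    | zero => ext; simp
    | succ n ih => ext; simp [pow_succ', ih, add_assoc]
  refine orderOf_eq_prime ?_ fun h => ?_
  · rw [hpow, ringChar.Nat.cast_ringChar]
    ext
    simp
  · simpa using congrArg (· 0) h

variable [DecidableEq F]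

theorem alternatingGroup_not_le_affineGroup (hF : 4 < Fintype.card F) :
    ¬ alternatingGroup F ≤ affineGroup F := by
  intro hle
  obtain ⟨t, ht, htc⟩ := Finset.exists_subset_card_eq (s := ({0, 1} : Finset F)ᶜ) (n := 3)
    (by rw [Finset.card_compl]; have : #({0, 1} : Finset F) ≤ 2 := Finset.card_le_two; omega)
  obtain ⟨x, y, z, hxy, hxz, hyz, rfl⟩ := Finset.card_eq_three.mp htc
  simp only [Finset.insert_subset_iff, Finset.singleton_subset_iff, Finset.mem_compl,
    Finset.mem_insert, Finset.mem_singleton, not_or] at ht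
  obtain ⟨⟨hx₀, hx₁⟩, ⟨hy₀, hy₁⟩, hz₀, hz₁⟩ := ht
  have h3 := eq_one_of_mem_affineGroup (σ := swap x y * swap y z)
    (hle (by simp [mem_alternatingGroup, sign_swap hxy, sign_swap hyz]))
    (by rw [Perm.mul_apply, swap_apply_of_ne_of_ne (Ne.symm hy₀) (Ne.symm hz₀),
      swap_apply_of_ne_of_ne (Ne.symm hx₀) (Ne.symm hy₀)])
    (by rw [Perm.mul_apply, swap_apply_of_ne_of_ne (Ne.symm hy₁) (Ne.symm hz₁),
      swap_apply_of_ne_of_ne (Ne.symm hx₁) (Ne.symm hy₁)])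
  have := congrArg (· z) h3
  simp [hxz] at this

theorem orderOf_eq_ringChar_of_forall_apply_ne {σ : Perm F} (hσ : (orderOf σ).Prime)
    (h : ∀ x, σ x ≠ x) : orderOf σ = ringChar F := by
  have hdvd : orderOf σ ∣ Fintype.card F := by
    rw [← Finset.card_univ, ← Finset.eq_univ_of_forall fun x => mem_support.mpr (h x),
      card_support_eq_mul_orderOf hσ]
    exact dvd_mul_left _ _
  obtain ⟨n, hp, hcard⟩ := FiniteField.card F (ringChar F)
  rw [hcard] at hdvd
  exact (Nat.prime_dvd_prime_iff_eq hσ hp).mp (hσ.dvd_of_dvd_pow hdvd)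

theorem isConj_addRight_one {σ : Perm F} (hσ : (orderOf σ).Prime) (h : ∀ x, σ x ≠ x) :
    IsConj σ (Equiv.addRight 1) := by
  have hp := orderOf_eq_ringChar_of_forall_apply_ne hσ h
  have : Fact (ringChar F).Prime := ⟨hp ▸ hσ⟩
  refine isConj_of_orderOf_eq_prime hp orderOf_addRight_one ?_
  rw [Finset.eq_univ_of_forall fun x => mem_support.mpr (h x),
    Finset.eq_univ_of_forall fun x : F => mem_support.mpr (by simp)]

theorem exists_isConj_toPerm {σ : Perm F} (hσ : (orderOf σ).Prime) (h : #σ.supportᶜ = 1) :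
    ∃ u : Fˣ, IsConj σ (MulAction.toPerm u) := by
  have : Fact (orderOf σ).Prime := ⟨hσ⟩
  have hsupp : #σ.support = Fintype.card F - 1 := by
    rw [← compl_compl σ.support, Finset.card_compl, h]
  obtain ⟨u, hu⟩ := exists_prime_orderOf_dvd_card (G := Fˣ) (orderOf σ) (by
    rw [Fintype.card_units, ← hsupp, card_support_eq_mul_orderOf hσ]
    exact dvd_mul_left _ _)
  have hu₁ : (u : F) ≠ 1 := fun h₁ => hσ.ne_one (by rw [← hu, Units.val_eq_one.mp h₁, orderOf_one])
  have hsupp_u : (MulAction.toPerm u : Perm F).support = {0}ᶜ := by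
    ext x
    simp [Units.smul_def, mul_left_eq_self₀, hu₁]
  refine ⟨u, isConj_of_orderOf_eq_prime rfl ?_ ?_⟩
  · rw [← hu]
    exact orderOf_injective (MulAction.toPermHom Fˣ F) MulAction.toPerm_injective u
  · rw [hsupp, hsupp_u, Finset.card_compl, Finset.card_singleton]

theorem exists_mem_affineGroup_isConj {σ : Perm F} (hσ : (orderOf σ).Prime)
    (hfix : #σ.supportᶜ ≤ 1) : ∃ τ ∈ affineGroup F, IsConj σ τ := by
  rcases Nat.le_one_iff_eq_zero_or_eq_one.mp hfix with h | h
  · refine ⟨_, addRight_mem_affineGroup 1, isConj_addRight_one hσ fun x => ?_⟩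
    have hx : x ∉ σ.supportᶜ := by rw [Finset.card_eq_zero.mp h]; exact Finset.notMem_empty x
    simpa using hx
  · obtain ⟨u, hu⟩ := exists_isConj_toPerm hσ h
    exact ⟨_, toPerm_mem_affineGroup u, hu⟩

theorem not_invariablyGenerates_of_forall_apply_ne [CharP F 2] (hF : 4 < Fintype.card F)
    {c d : alternatingGroup F} (hc : (orderOf c).Prime) (hc' : ∀ x, (c : Perm F) x ≠ x)
    (hd : (orderOf d).Prime) : ¬ InvariablyGenerates c d := by
  rw [← orderOf_coe] at hc hd
  have hc2 : orderOf (c : Perm F) = 2 :=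
    (orderOf_eq_ringChar_of_forall_apply_ne hc hc').trans (ringChar.eq F 2)
  have hcc : (c : Perm F) * c = 1 := by rw [← sq, ← hc2, pow_orderOf_eq_one]
  intro h
  by_cases hfix : ∃ y₁ y₂, y₁ ≠ y₂ ∧ (d : Perm F) y₁ = y₁ ∧ (d : Perm F) y₂ = y₂
  · obtain ⟨y₁, y₂, hy, hy₁, hy₂⟩ := hfix
    exact not_invariablyGenerates_of_two_apply_eq_self (by omega) hcc (hc' 0) hy hy₁ hy₂ h
  · push Not at hfix
    obtain ⟨τ, hτ, hdτ⟩ := exists_mem_affineGroup_isConj hd <| Finset.card_le_one.mpr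
      fun a ha b hb => by_contra fun hab => hfix a b hab (by simpa using ha) (by simpa using hb)
    exact alternatingGroup_not_le_affineGroup hF <| h.alternatingGroup_le_of_isConj hcc (hc' 0)
      (isConj_addRight_one hc hc') hdτ (addRight_mem_affineGroup 1) hτ

theorem not_invariablyGenerates_of_prime_orderOf [CharP F 2] (hF : 4 < Fintype.card F)
    {c d : alternatingGroup F} (hc : (orderOf c).Prime) (hd : (orderOf d).Prime) :
    ¬ InvariablyGenerates c d := by
  by_cases hcx : ∀ x, (c : Perm F) x ≠ x
  · exact not_invariablyGenerates_of_forall_apply_ne hF hc hcx hd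
  by_cases hdy : ∀ y, (d : Perm F) y ≠ y
  · exact fun h => not_invariablyGenerates_of_forall_apply_ne hF hd hdy hc h.symm
  push Not at hcx hdy
  obtain ⟨x, hx⟩ := hcx
  obtain ⟨y, hy⟩ := hdy
  exact not_invariablyGenerates_of_apply_eq_self (by omega) hx hy

end AffineGroup

theorem stmt_17 (a : ℕ) (ha : 3 ≤ a) :
    ¬ ∃ c d : alternatingGroup (Fin (2 ^ a)),
      (∃ p : ℕ, p.Prime ∧ orderOf c = p) ∧
      (∃ q : ℕ, q.Prime ∧ orderOf d = q) ∧
      ∀ c' d' : alternatingGroup (Fin (2 ^ a)), IsConj c c' → IsConj d d' →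
        Subgroup.closure {c', d'} = ⊤ := by
  classical
  rintro ⟨c, d, ⟨p, hp, rfl⟩, ⟨q, hq, rfl⟩, h⟩
  let F := GaloisField 2 a
  let : Fintype F := Fintype.ofFinite F
  have hF : Fintype.card F = 2 ^ a := by
    rw [← Nat.card_eq_fintype_card, GaloisField.card 2 a (by omega)]
  let φ := Equiv.altCongrHom (Fintype.equivOfCardEq (by rw [hF, Fintype.card_fin]) :
    Fin (2 ^ a) ≃ F)
  refine not_invariablyGenerates_of_prime_orderOf (F := F) ?_ (c := φ c) (d := φ d)
    (by rwa [MulEquiv.orderOf_eq]) (by rwa [MulEquiv.orderOf_eq]) (InvariablyGenerates.map h φ)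
  rw [hF]
  calc 4 < 2 ^ 3 := by norm_num
    _ ≤ 2 ^ a := Nat.pow_le_pow_right two_pos ha
end

section
/- Suppose $p$ and $r$ are primes with $p$ odd, $p \mid n$, and $r + 2 < n < r + p$, where $n \ge 9$. Let $x \in A_n$ be a product of $n/p$ disjoint $p$-cycles (a fixed-point-free element of order $p$) and let $y \in A_n$ be an $r$-cycle. Then the subgroup $\langle x, y \rangle$ acts transitively on $\{1, \ldots, n\}$. -/
theorem stmt_19 (n p r : ℕ) (hn : 9 ≤ n) (hp : p.Prime) (hpodd : Odd p)
    (hpn : p ∣ n) (hr : r.Prime) (h1 : r + 2 < n) (h2 : n < r + p)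
    (x y : Equiv.Perm (Fin n))
    (hxA : x ∈ alternatingGroup (Fin n)) (hyA : y ∈ alternatingGroup (Fin n))
    (hx : x.cycleType = Multiset.replicate (n / p) p) (hy : y.cycleType = {r}) :
    ∀ i j : Fin n, ∃ g ∈ Subgroup.closure {x, y}, g i = j := by
  have hnp : n / p * p = n := Nat.div_mul_cancel hpn
  have hxs : x.support = Finset.univ := by
    apply Finset.eq_univ_of_card
    rw [← Equiv.Perm.sum_cycleType, hx, Multiset.sum_replicate, smul_eq_mul, hnp,
      Fintype.card_fin]
  have hyc : y.IsCycle := by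
    rw [← Equiv.Perm.card_cycleType_eq_one, hy]; rfl
  have hYcard : y.support.card = r := by
    have := Equiv.Perm.sum_cycleType y
    rw [hy] at this
    simpa using this.symm
  have key : ∀ i : Fin n, ∃ a ∈ y.support, x.SameCycle i a := by
    intro i
    have hi : i ∈ x.support := by rw [hxs]; exact Finset.mem_univ i
    set S := (x.cycleOf i).support with hS
    have hScard : S.card = p := by
      have hmem : (x.cycleOf i).support.card ∈ x.cycleType := by
        rw [Equiv.Perm.cycleType]
        apply Multiset.mem_map_of_mem
        exact (Equiv.Perm.cycleOf_mem_cycleFactorsFinset_iff).2 hi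
      rw [hx] at hmem
      exact Multiset.eq_of_mem_replicate hmem
    have hinter : (S ∩ y.support).Nonempty := by
      rw [← Finset.card_pos]
      have h3 := Finset.card_union_add_card_inter S y.support
      have h4 : (S ∪ y.support).card ≤ n := by
        simpa using Finset.card_le_univ (S ∪ y.support)
      omega
    obtain ⟨a, ha⟩ := hinter
    rw [Finset.mem_inter] at ha
    exact ⟨a, ha.2, ((Equiv.Perm.mem_support_cycleOf_iff).1 ha.1).1⟩
  intro i j
  obtain ⟨a, haY, ⟨k, hk⟩⟩ := key i
  obtain ⟨b, hbY, ⟨m, hm⟩⟩ := key j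
  obtain ⟨t, ht⟩ := hyc.sameCycle (Equiv.Perm.mem_support.1 haY) (Equiv.Perm.mem_support.1 hbY)
  refine ⟨x ^ (-m) * (y ^ t * x ^ k), ?_, ?_⟩
  · have hxc : x ∈ Subgroup.closure {x, y} := Subgroup.subset_closure (Set.mem_insert x {y})
    have hyc2 : y ∈ Subgroup.closure {x, y} := Subgroup.subset_closure (Set.mem_insert_of_mem x rfl)
    exact mul_mem (zpow_mem hxc _) (mul_mem (zpow_mem hyc2 _) (zpow_mem hxc _))
  · simp only [Equiv.Perm.mul_apply]
    rw [hk, ht, ← hm, ← Equiv.Perm.mul_apply, ← zpow_add, neg_add_cancel, zpow_zero,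
      Equiv.Perm.one_apply]
end
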